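/- arXiv:0806.4448 — 2 statements merged into one kernel-verified Lean document; each statement's English description precedes it below -/
import Mathlib

section
/- Let S₁,…,Sₙ ∈ ℂ^{m×m} be unitary matrices with Sₙ⋯S₂S₁ = S, and for j ≤ k set S_{k↞j} = S_k S_{k−1}⋯S_j, S_{k↞k} = S_k, S_{k↞k+1} = I_m. Let R ∈ ℝ^{2n×2n} be symmetric with 2×2 blocks R_{jk} satisfying R_{kj} = R_{jk}ᵀ, and let K = [K₁ K₂ … Kₙ] ∈ ℂ^{m×2n} with K_j ∈ ℂ^{m×2}. Set K̃_k = S_{n↞k+1}† K_k and G_j = (S_j, K̃_j x_j, ½ x_jᵀ R_{jj} x_j). Define the direct interaction Hamiltonian H^d = Σ_{j=1}^{n−1} Σ_{k=j+1}^{n} x_kᵀ ( R_{jk}ᵀ − (1/(2i))(K̃_k† S_{k↞j+1} K̃_j − K̃_kᵀ S_{k↞j+1}# K̃_j#) ) x_j. Then the iterated series product (S′, L′, H′) := Gₙ ◁ Gₙ₋₁ ◁ ⋯ ◁ G₁ satisfies S′ = S, L′ = K x, and H′ + H^d = ½ xᵀ R x. (This is the content of the paper's main synthesis theorem at the level of system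 parameter triples.) -/
/-! By induction on the length of the chain, the iterated series product multiplies the
scattering matrices, routes the coupling operator of component `k` through `S_{n ↞ k+1}`, and
creates, for every pair `j < k`, the Hamiltonian term `seriesCoupling G j k`. Since the modes of
different components commute and are self-adjoint, that term is the quadratic form in `x_k, x_j`
that the direct interaction Hamiltonian subtracts. Unitarity of `S_{n ↞ k+1}` turns `K̃_k x_k` back
into `K_k x_k`, and `R_{kj} = R_{jk}ᵀ` splits `½ xᵀ R x` into the diagonal terms of the components
and the direct couplings `x_kᵀ R_{jk}ᵀ x_j`. -/

open Finset Matrix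

noncomputable section

variable {A : Type*} [Ring A] [Algebra ℂ A] [StarRing A] [StarModule ℂ A]

/-- Product of a complex matrix with a vector of algebra elements. -/
def mulVecA {ι κ : Type*} [Fintype κ] (M : Matrix ι κ ℂ) (v : κ → A) : ι → A :=
  fun i => ∑ j, M i j • v j

/-- Quadratic-form-style expression `xᵀ M y` with values in the algebra. -/
def quadA {ι κ : Type*} [Fintype ι] [Fintype κ] (x : ι → A) (M : Matrix ι κ ℂ) (y : κ → A) : A :=
  ∑ i, ∑ j, M i j • (x i * y j)

/-- Sesquilinear expression `L† S L'` with values in the algebra. -/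
def sesqA {ι : Type*} [Fintype ι] (L : ι → A) (S : Matrix ι ι ℂ) (L' : ι → A) : A :=
  ∑ i, ∑ j, S i j • (star (L i) * L' j)

/-- Entrywise complex conjugate `M#`. -/
def conjM {ι κ : Type*} (M : Matrix ι κ ℂ) : Matrix ι κ ℂ := M.map (starRingEnd ℂ)

/-- A generalized open oscillator triple `(S, L, H)` with `m` field channels. -/
structure GOO (A : Type*) [Ring A] (m : ℕ) where
  S : Matrix (Fin m) (Fin m) ℂ
  L : Fin m → A
  H : A

/-- The series product `G₂ ◁ G₁`. -/
def seriesProd {m : ℕ} (G2 G1 : GOO A m) : GOO A m where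
  S := G2.S * G1.S
  L := fun i => mulVecA G2.S G1.L i + G2.L i
  H := G1.H + G2.H + (2 * Complex.I)⁻¹ • (sesqA G2.L G2.S G1.L - sesqA G1.L G2.Sᴴ G2.L)

/-- Iterated series product `G k ◁ ⋯ ◁ G 1 ◁ G 0`. -/
def chainG {m : ℕ} (G : ℕ → GOO A m) : ℕ → GOO A m
  | 0 => G 0
  | k + 1 => seriesProd (G (k + 1)) (chainG G k)

/-- `S_{k ↞ j} = S k * S (k-1) * ⋯ * S j` (equal to `1` when `j = k + 1`). -/
def Sprod {m : ℕ} (S : ℕ → Matrix (Fin m) (Fin m) ℂ) (k j : ℕ) : Matrix (Fin m) (Fin m) ℂ :=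
  (((List.range' j (k + 1 - j)).reverse).map S).prod

section Sums

variable {M : Type*} [AddCommMonoid M]

theorem sum_range_sum_Icc_eq_sum_range_sum_range (f : ℕ → ℕ → M) (n : ℕ) :
    ∑ j ∈ range n, ∑ k ∈ Icc (j + 1) n, f j k = ∑ k ∈ range (n + 1), ∑ j ∈ range k, f j k :=
  Finset.sum_comm' fun j k => by simp only [mem_range, mem_Icc]; omega

theorem sum_range_sum_range_eq_sum_diag_add_pairs (g : ℕ → ℕ → M) (N : ℕ) :
    ∑ j ∈ range N, ∑ k ∈ range N, g j k =
      ∑ k ∈ range N, (g k k + ∑ j ∈ range k, (g j k + g k j)) := by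
  induction N with
  | zero => simp
  | succ N ih =>
    simp only [sum_range_succ, sum_add_distrib, ih]
    abel

end Sums

section Sprod

variable {m : ℕ} (S : ℕ → Matrix (Fin m) (Fin m) ℂ)

theorem Sprod_of_lt {k j : ℕ} (h : k < j) : Sprod S k j = 1 := by
  simp [Sprod, Nat.sub_eq_zero_of_le h]

theorem Sprod_self (k : ℕ) : Sprod S k k = S k := by
  simp [Sprod, List.range'_one]

theorem Sprod_succ {k j : ℕ} (h : j ≤ k + 1) : Sprod S (k + 1) j = S (k + 1) * Sprod S k j := by
  have hlen : k + 1 + 1 - j = (k + 1 - j) + 1 := by omega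
  have hlast : j + 1 * (k + 1 - j) = k + 1 := by omega
  rw [Sprod, hlen, List.range'_concat, List.reverse_append, hlast]
  simp [Sprod]

theorem Sprod_mem_unitaryGroup {k : ℕ} (hS : ∀ i ≤ k, S i ∈ unitaryGroup (Fin m) ℂ) (j : ℕ) :
    Sprod S k j ∈ unitaryGroup (Fin m) ℂ :=
  Submonoid.list_prod_mem _ fun U hU => by
    simp only [List.mem_map, List.mem_reverse, List.mem_range'_1] at hU
    obtain ⟨i, hi, rfl⟩ := hU
    exact hS i (by omega)

end Sprod

section

omit [StarRing A] [StarModule ℂ A]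

theorem mulVecA_mulVecA {ι κ σ : Type*} [Fintype κ] [Fintype σ] (M : Matrix ι κ ℂ)
    (N : Matrix κ σ ℂ) (v : σ → A) : mulVecA M (mulVecA N v) = mulVecA (M * N) v := by
  funext i
  simp only [mulVecA, mul_apply, Finset.smul_sum, Finset.sum_smul, smul_smul]
  exact Finset.sum_comm

theorem mulVecA_one {ι : Type*} [Fintype ι] [DecidableEq ι] (v : ι → A) : mulVecA 1 v = v := by
  funext i
  simp [mulVecA, one_apply]

theorem mulVecA_sum {ι κ γ : Type*} [Fintype κ] (M : Matrix ι κ ℂ) (s : Finset γ)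
    (v : γ → κ → A) : mulVecA M (∑ c ∈ s, v c) = ∑ c ∈ s, mulVecA M (v c) := by
  funext i
  simp only [mulVecA, Finset.sum_apply, Finset.smul_sum]
  exact Finset.sum_comm

theorem quadA_sum_left {ι κ γ : Type*} [Fintype ι] [Fintype κ] (s : Finset γ) (v : γ → ι → A)
    (M : Matrix ι κ ℂ) (y : κ → A) :
    quadA (∑ c ∈ s, v c) M y = ∑ c ∈ s, quadA (v c) M y := by
  simp only [quadA, Finset.sum_apply, Finset.sum_mul, Finset.smul_sum]
  exact (Finset.sum_congr rfl fun _ _ => Finset.sum_comm).trans Finset.sum_comm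

theorem quadA_sum_right {ι κ γ : Type*} [Fintype ι] [Fintype κ] (x : ι → A) (M : Matrix ι κ ℂ)
    (s : Finset γ) (v : γ → κ → A) :
    quadA x M (∑ c ∈ s, v c) = ∑ c ∈ s, quadA x M (v c) := by
  simp only [quadA, Finset.sum_apply, Finset.mul_sum, Finset.smul_sum]
  exact (Finset.sum_congr rfl fun _ _ => Finset.sum_comm).trans Finset.sum_comm

theorem quadA_mulVecA_left {ι κ σ : Type*} [Fintype ι] [Fintype κ] [Fintype σ]
    (P : Matrix ι σ ℂ) (x : σ → A) (M : Matrix ι κ ℂ) (y : κ → A) :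
    quadA (mulVecA P x) M y = quadA x (Pᵀ * M) y := by
  simp only [quadA, mulVecA, mul_apply, transpose_apply, Finset.sum_mul, smul_mul_assoc,
    Finset.smul_sum, Finset.sum_smul, smul_smul]
  simp_rw [mul_comm (M _ _)]
  exact ((Finset.sum_congr rfl fun _ _ => Finset.sum_comm).trans Finset.sum_comm).trans
    (Finset.sum_congr rfl fun _ _ => Finset.sum_comm)

theorem quadA_mulVecA_right {ι κ σ : Type*} [Fintype ι] [Fintype κ] [Fintype σ]
    (x : ι → A) (M : Matrix ι κ ℂ) (P : Matrix κ σ ℂ) (y : σ → A) :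
    quadA x M (mulVecA P y) = quadA x (M * P) y := by
  simp only [quadA, mulVecA, mul_apply, Finset.mul_sum, mul_smul_comm,
    Finset.smul_sum, Finset.sum_smul, smul_smul]
  exact Finset.sum_congr rfl fun _ _ => Finset.sum_comm

theorem quadA_sub {ι κ : Type*} [Fintype ι] [Fintype κ] (x : ι → A) (M N : Matrix ι κ ℂ)
    (y : κ → A) : quadA x (M - N) y = quadA x M y - quadA x N y := by
  simp [quadA, sub_smul, Finset.sum_sub_distrib]

theorem quadA_smul {ι κ : Type*} [Fintype ι] [Fintype κ] (c : ℂ) (x : ι → A)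
    (M : Matrix ι κ ℂ) (y : κ → A) : quadA x (c • M) y = c • quadA x M y := by
  simp [quadA, Finset.smul_sum, smul_smul]

theorem quadA_comm {ι κ : Type*} [Fintype ι] [Fintype κ] (x : ι → A) (M : Matrix ι κ ℂ)
    (y : κ → A) (h : ∀ a b, Commute (x a) (y b)) : quadA x M y = quadA y Mᵀ x := by
  rw [quadA, Finset.sum_comm]
  simp [quadA, (h _ _).eq]

end

section

omit [StarModule ℂ A]

theorem sesqA_eq_quadA {ι : Type*} [Fintype ι] (L : ι → A) (S : Matrix ι ι ℂ) (L' : ι → A) :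
    sesqA L S L' = quadA (star L) S L' := rfl

theorem sesqA_sum_left {ι γ : Type*} [Fintype ι] (s : Finset γ) (v : γ → ι → A)
    (S : Matrix ι ι ℂ) (L : ι → A) :
    sesqA (∑ c ∈ s, v c : ι → A) S L = ∑ c ∈ s, sesqA (v c) S L := by
  rw [sesqA_eq_quadA, star_sum, quadA_sum_left]
  rfl

theorem sesqA_sum_right {ι γ : Type*} [Fintype ι] (L : ι → A) (S : Matrix ι ι ℂ)
    (s : Finset γ) (v : γ → ι → A) :
    sesqA L S (∑ c ∈ s, v c : ι → A) = ∑ c ∈ s, sesqA L S (v c) :=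
  quadA_sum_right _ _ _ _

theorem sesqA_mulVecA_right {ι : Type*} [Fintype ι] (L : ι → A) (S M : Matrix ι ι ℂ)
    (L' : ι → A) : sesqA L S (mulVecA M L') = sesqA L (S * M) L' :=
  quadA_mulVecA_right _ _ _ _

end

theorem transpose_conjM {ι κ : Type*} (M : Matrix ι κ ℂ) : (conjM M)ᵀ = Mᴴ := rfl

theorem star_mulVecA {ι κ : Type*} [Fintype κ] (M : Matrix ι κ ℂ) (v : κ → A) :
    star (mulVecA M v) = mulVecA (conjM M) (star v) := by
  funext i
  simp [mulVecA, conjM, star_sum, star_smul]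

theorem sesqA_mulVecA_left {ι : Type*} [Fintype ι] (M : Matrix ι ι ℂ) (L : ι → A)
    (S : Matrix ι ι ℂ) (L' : ι → A) : sesqA (mulVecA M L) S L' = sesqA L (Mᴴ * S) L' := by
  rw [sesqA_eq_quadA, star_mulVecA, quadA_mulVecA_left, transpose_conjM]
  rfl

theorem sesqA_mulVecA_mulVecA {ι κ : Type*} [Fintype ι] [Fintype κ] (Kl : Matrix ι κ ℂ)
    (S : Matrix ι ι ℂ) (Kr : Matrix ι κ ℂ) {x : κ → A} (hx : ∀ a, IsSelfAdjoint (x a))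
    (y : κ → A) : sesqA (mulVecA Kl x) S (mulVecA Kr y) = quadA x (Klᴴ * S * Kr) y := by
  have hstar : star x = x := funext fun a => (hx a).star_eq
  rw [sesqA_eq_quadA, star_mulVecA, hstar, quadA_mulVecA_left, quadA_mulVecA_right,
    transpose_conjM]

theorem sesqA_sub_sesqA_conjTranspose_mulVecA {ι κ : Type*} [Fintype ι] [Fintype κ]
    (P : Matrix ι ι ℂ) (Kj Kk : Matrix ι κ ℂ) {xj xk : κ → A}
    (hxj : ∀ a, IsSelfAdjoint (xj a)) (hxk : ∀ a, IsSelfAdjoint (xk a))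
    (hcomm : ∀ a b, Commute (xj a) (xk b)) :
    sesqA (mulVecA Kk xk) P (mulVecA Kj xj) - sesqA (mulVecA Kj xj) Pᴴ (mulVecA Kk xk) =
      quadA xk (Kkᴴ * P * Kj - Kkᵀ * conjM P * conjM Kj) xj := by
  rw [sesqA_mulVecA_mulVecA _ _ _ hxk, sesqA_mulVecA_mulVecA _ _ _ hxj, quadA_comm _ _ _ hcomm,
    quadA_sub, transpose_mul, transpose_mul, ← Matrix.mul_assoc]
  rfl

section Chain

variable {m : ℕ}

section

omit [StarModule ℂ A]

theorem chainG_congr {G G' : ℕ → GOO A m} {r : ℕ} (h : ∀ k ≤ r, G k = G' k) :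
    chainG G r = chainG G' r := by
  induction r with
  | zero => exact h 0 le_rfl
  | succ r ih => simp only [chainG, h (r + 1) le_rfl, ih fun k hk => h k (by omega)]

theorem chainG_S (G : ℕ → GOO A m) (r : ℕ) : (chainG G r).S = Sprod (fun k => (G k).S) r 0 := by
  induction r with
  | zero => exact (Sprod_self (fun k => (G k).S) 0).symm
  | succ r ih => rw [Sprod_succ _ (Nat.zero_le _), ← ih]; rfl

theorem chainG_L (G : ℕ → GOO A m) (r : ℕ) :
    (chainG G r).L = ∑ k ∈ range (r + 1), mulVecA (Sprod (fun i => (G i).S) r (k + 1)) (G k).L := by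
  induction r with
  | zero => simp [chainG, Sprod_of_lt, mulVecA_one]
  | succ r ih =>
    have hL : (chainG G (r + 1)).L = mulVecA (G (r + 1)).S (chainG G r).L + (G (r + 1)).L := rfl
    rw [hL, ih, mulVecA_sum, sum_range_succ _ (r + 1), Sprod_of_lt _ (Nat.lt_succ_self _),
      mulVecA_one]
    congr 1
    refine sum_congr rfl fun k hk => ?_
    rw [mulVecA_mulVecA, Sprod_succ _ (by simp at hk; omega)]

end

def seriesCoupling (G : ℕ → GOO A m) (j k : ℕ) : A :=
  (2 * Complex.I)⁻¹ • (sesqA (G k).L (Sprod (fun i => (G i).S) k (j + 1)) (G j).L -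
    sesqA (G j).L (Sprod (fun i => (G i).S) k (j + 1))ᴴ (G k).L)

theorem chainG_H (G : ℕ → GOO A m) (r : ℕ) :
    (chainG G r).H = ∑ k ∈ range (r + 1), ((G k).H + ∑ j ∈ range k, seriesCoupling G j k) := by
  induction r with
  | zero => simp [chainG]
  | succ r ih =>
    have hH : (chainG G (r + 1)).H = (chainG G r).H + (G (r + 1)).H + (2 * Complex.I)⁻¹ •
        (sesqA (G (r + 1)).L (G (r + 1)).S (chainG G r).L -
          sesqA (chainG G r).L (G (r + 1)).Sᴴ (G (r + 1)).L) := rfl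
    rw [hH, ih, sum_range_succ _ (r + 1), chainG_L, sesqA_sum_right, sesqA_sum_left,
      ← sum_sub_distrib, smul_sum, add_assoc]
    congr 2
    refine sum_congr rfl fun j hj => ?_
    rw [seriesCoupling, sesqA_mulVecA_right, sesqA_mulVecA_left, ← conjTranspose_mul,
      Sprod_succ _ (by simp at hj; omega)]

def oscillators {κ : Type*} [Fintype κ] (S : ℕ → Matrix (Fin m) (Fin m) ℂ)
    (Kt : ℕ → Matrix (Fin m) κ ℂ) (x : ℕ → κ → A) (H : ℕ → A) : ℕ → GOO A m :=
  fun k => ⟨S k, mulVecA (Kt k) (x k), H k⟩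

variable {κ : Type*} [Fintype κ] (S : ℕ → Matrix (Fin m) (Fin m) ℂ) (Kt : ℕ → Matrix (Fin m) κ ℂ)
  (x : ℕ → κ → A)

theorem seriesCoupling_oscillators (H : ℕ → A) {j k : ℕ}
    (hxj : ∀ a, IsSelfAdjoint (x j a)) (hxk : ∀ a, IsSelfAdjoint (x k a))
    (hcomm : ∀ a b, Commute (x j a) (x k b)) :
    seriesCoupling (oscillators S Kt x H) j k =
      (2 * Complex.I)⁻¹ • quadA (x k) ((Kt k)ᴴ * Sprod S k (j + 1) * Kt j -
        (Kt k)ᵀ * conjM (Sprod S k (j + 1)) * conjM (Kt j)) (x j) :=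
  congrArg _ (sesqA_sub_sesqA_conjTranspose_mulVecA _ _ _ hxj hxk hcomm)

omit [StarModule ℂ A] in
theorem chainG_oscillators_L {n : ℕ} (hS : ∀ k ≤ n, S k ∈ unitaryGroup (Fin m) ℂ)
    (K : ℕ → Matrix (Fin m) κ ℂ) (hKt : ∀ k ≤ n, Kt k = (Sprod S n (k + 1))ᴴ * K k)
    (H : ℕ → A) :
    (chainG (oscillators S Kt x H) n).L = ∑ k ∈ range (n + 1), mulVecA (K k) (x k) := by
  rw [chainG_L]
  refine sum_congr rfl fun k hk => ?_
  have hU := mem_unitaryGroup_iff.mp (Sprod_mem_unitaryGroup S hS (k + 1))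
  change mulVecA (Sprod S n (k + 1)) (mulVecA (Kt k) (x k)) = _
  rw [mulVecA_mulVecA, hKt k (by simp at hk; omega), ← Matrix.mul_assoc, ← star_eq_conjTranspose,
    hU, Matrix.one_mul]

theorem chainG_oscillators_H_add {n : ℕ} (R : ℕ → ℕ → Matrix κ κ ℝ)
    (hR : ∀ j ≤ n, ∀ k ≤ n, R k j = (R j k)ᵀ)
    (hxsa : ∀ k ≤ n, ∀ a, IsSelfAdjoint (x k a))
    (hcomm : ∀ j ≤ n, ∀ k ≤ n, j ≠ k → ∀ a b, Commute (x j a) (x k b)) :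
    (chainG (oscillators S Kt x fun k => (2 : ℂ)⁻¹ • quadA (x k) ((R k k).map Complex.ofReal) (x k))
        n).H +
      ∑ j ∈ range n, ∑ k ∈ Icc (j + 1) n,
        quadA (x k) (((R j k)ᵀ).map Complex.ofReal - (2 * Complex.I)⁻¹ •
          ((Kt k)ᴴ * Sprod S k (j + 1) * Kt j -
            (Kt k)ᵀ * conjM (Sprod S k (j + 1)) * conjM (Kt j))) (x j) =
      (2 : ℂ)⁻¹ • ∑ j ∈ range (n + 1), ∑ k ∈ range (n + 1),
        quadA (x j) ((R j k).map Complex.ofReal) (x k) := by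
  rw [chainG_H, sum_range_sum_Icc_eq_sum_range_sum_range,
    sum_range_sum_range_eq_sum_diag_add_pairs, smul_sum, ← sum_add_distrib]
  refine sum_congr rfl fun k hk => ?_
  rw [smul_add, smul_sum, add_assoc, ← sum_add_distrib]
  congr 1
  refine sum_congr rfl fun j hj => ?_
  have hjk : j < k := mem_range.mp hj
  have hkn : k ≤ n := Nat.lt_succ_iff.mp (mem_range.mp hk)
  have hcomm_jk := hcomm j (by omega) k hkn hjk.ne
  rw [seriesCoupling_oscillators S Kt x _ (hxsa j (by omega)) (hxsa k hkn) hcomm_jk,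
    quadA_sub (x k) ((R j k)ᵀ.map Complex.ofReal), quadA_smul, add_sub_cancel,
    quadA_comm (x j) _ (x k) hcomm_jk, hR j (by omega) k hkn, transpose_map, ← two_smul ℂ,
    smul_smul, inv_mul_cancel₀ two_ne_zero, one_smul]

end Chain

/-- The main synthesis theorem: an `n+1` degrees of freedom generalized open
oscillator `G = (Sgoal, K x, ½ xᵀ R x)` is realized by the series chain of the one degree of
freedom oscillators `G k = (S k, K̃ₖ xₖ, ½ xₖᵀ Rₖₖ xₖ)` together with the direct interaction
Hamiltonian `H^d`. -/
theorem stmt0 (m n : ℕ) (q p : ℕ → A)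
    (hq : ∀ j ≤ n, IsSelfAdjoint (q j)) (hp : ∀ j ≤ n, IsSelfAdjoint (p j))
    (ccr_qp : ∀ j ≤ n, ∀ k ≤ n,
      q j * p k - p k * q j = if j = k then (2 * Complex.I) • (1 : A) else 0)
    (ccr_qq : ∀ j ≤ n, ∀ k ≤ n, q j * q k - q k * q j = 0)
    (ccr_pp : ∀ j ≤ n, ∀ k ≤ n, p j * p k - p k * p j = 0)
    (S : ℕ → Matrix (Fin m) (Fin m) ℂ)
    (hS : ∀ k ≤ n, S k ∈ Matrix.unitaryGroup (Fin m) ℂ)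
    (Sgoal : Matrix (Fin m) (Fin m) ℂ) (hgoal : Sprod S n 0 = Sgoal)
    (R : ℕ → ℕ → Matrix (Fin 2) (Fin 2) ℝ)
    (hR : ∀ j ≤ n, ∀ k ≤ n, R k j = (R j k)ᵀ)
    (K Kt : ℕ → Matrix (Fin m) (Fin 2) ℂ)
    (hKt : ∀ k ≤ n, Kt k = (Sprod S n (k + 1))ᴴ * K k)
    (x : ℕ → Fin 2 → A)
    (hx : ∀ j, x j = fun a => if a = 0 then q j else p j)
    (G : ℕ → GOO A m)
    (hG : ∀ k ≤ n, G k = ⟨S k, mulVecA (Kt k) (x k),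
        (2 : ℂ)⁻¹ • quadA (x k) ((R k k).map Complex.ofReal) (x k)⟩)
    (Hd : A)
    (hHd : Hd = ∑ j ∈ Finset.range n, ∑ k ∈ Finset.Icc (j + 1) n,
      quadA (x k)
        (((R j k)ᵀ).map Complex.ofReal -
          (2 * Complex.I)⁻¹ •
            ((Kt k)ᴴ * Sprod S k (j + 1) * Kt j -
             (Kt k)ᵀ * conjM (Sprod S k (j + 1)) * conjM (Kt j)))
        (x j)) :
    (chainG G n).S = Sgoal ∧
    (chainG G n).L = (fun i => ∑ k ∈ Finset.range (n + 1), ∑ a, (K k) i a • x k a) ∧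
    (chainG G n).H + Hd =
      (2 : ℂ)⁻¹ • ∑ j ∈ Finset.range (n + 1), ∑ k ∈ Finset.range (n + 1),
        quadA (x j) ((R j k).map Complex.ofReal) (x k) := by
  have hxsa : ∀ k ≤ n, ∀ a, IsSelfAdjoint (x k a) := fun k hk a => by
    simp only [hx]; split_ifs; exacts [hq k hk, hp k hk]
  have hcomm : ∀ j ≤ n, ∀ k ≤ n, j ≠ k → ∀ a b, Commute (x j a) (x k b) := by
    intro j hj k hk hjk a b
    have hqp := ccr_qp j hj k hk
    have hpq := ccr_qp k hk j hj
    rw [if_neg hjk] at hqp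
    rw [if_neg (Ne.symm hjk)] at hpq
    simp only [hx]
    split_ifs
    exacts [sub_eq_zero.mp (ccr_qq j hj k hk), sub_eq_zero.mp hqp, (sub_eq_zero.mp hpq).symm,
      sub_eq_zero.mp (ccr_pp j hj k hk)]
  rw [chainG_congr (G' := oscillators S Kt x _) hG]
  refine ⟨(chainG_S _ n).trans hgoal, ?_, ?_⟩
  · rw [chainG_oscillators_L S Kt x hS K hKt]
    funext i
    exact Finset.sum_apply i _ _
  · rw [hHd]
    exact chainG_oscillators_H_add S Kt x R hR hxsa hcomm
end
end

section
/- Let G₁ = (S₁, K₁x₁, ½x₁ᵀR₁x₁) and G₂ = (S₂, K₂x₂, ½x₂ᵀR₂x₂) be generalized open oscillator triples with m field channels, built on commuting families of canonical operators x₁ (of 2n₁ self-adjoint components) and x₂ (of 2n₂ self-adjoint components), with R₁, R₂ real symmetric and S₁, S₂ unitary. Let R₁₂ ∈ ℝ^{2n₁×2n₂} and define H^d₁₂ = ½x₁ᵀR₁₂x₂ + ½x₂ᵀR₁₂ᵀx₁ − (1/(2i))(L₂†S₂L₁ − L₁†S₂†L₂), where L_j = K_jx_j. Then the network obtained by forming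 the series product G₂ ◁ G₁ and adding H^d₁₂ to its Hamiltonian is the generalized open oscillator triple ( S₂S₁, [S₂K₁ K₂] x, ½ xᵀ [[R₁, R₁₂],[R₁₂ᵀ, R₂]] x ), where x = (x₁ᵀ, x₂ᵀ)ᵀ. -/
open Finset Matrix

noncomputable section

variable {A : Type*} [Ring A] [Algebra ℂ A] [StarRing A] [StarModule ℂ A]

section BlockAlgebra

variable {𝒜 : Type*} [Ring 𝒜] [Algebra ℂ 𝒜] {ι κ μ ι' κ' : Type*}

theorem mulVecA_mul [Fintype κ] [Fintype μ] (M : Matrix ι κ ℂ) (N : Matrix κ μ ℂ) (v : μ → 𝒜) :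
    mulVecA (M * N) v = mulVecA M (mulVecA N v) := by
  funext i
  simp only [mulVecA, Matrix.mul_apply, Finset.smul_sum, smul_smul, Finset.sum_smul]
  exact Finset.sum_comm

theorem mulVecA_fromCols [Fintype κ] [Fintype κ'] (M : Matrix ι κ ℂ) (N : Matrix ι κ' ℂ)
    (u : κ → 𝒜) (v : κ' → 𝒜) :
    mulVecA (Matrix.fromCols M N) (Sum.elim u v) = mulVecA M u + mulVecA N v := by
  funext i
  simp only [mulVecA, Fintype.sum_sum_type, Matrix.fromCols_apply_inl, Matrix.fromCols_apply_inr,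
    Sum.elim_inl, Sum.elim_inr, Pi.add_apply]

theorem quadA_fromBlocks [Fintype ι] [Fintype κ] [Fintype ι'] [Fintype κ']
    (x : ι → 𝒜) (y : ι' → 𝒜) (x' : κ → 𝒜) (y' : κ' → 𝒜)
    (P : Matrix ι κ ℂ) (Q : Matrix ι κ' ℂ) (R : Matrix ι' κ ℂ) (T : Matrix ι' κ' ℂ) :
    quadA (Sum.elim x y) (Matrix.fromBlocks P Q R T) (Sum.elim x' y') =
      quadA x P x' + quadA x Q y' + quadA y R x' + quadA y T y' := by
  simp only [quadA, Fintype.sum_sum_type, Matrix.fromBlocks_apply₁₁, Matrix.fromBlocks_apply₁₂,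
    Matrix.fromBlocks_apply₂₁, Matrix.fromBlocks_apply₂₂, Sum.elim_inl, Sum.elim_inr,
    Finset.sum_add_distrib]
  abel

end BlockAlgebra

theorem stmt4_general (m n1 n2 : ℕ)
    (x1 : Fin (2 * n1) → A) (x2 : Fin (2 * n2) → A)
    (S1 S2 : Matrix (Fin m) (Fin m) ℂ)
    (K1 : Matrix (Fin m) (Fin (2 * n1)) ℂ) (K2 : Matrix (Fin m) (Fin (2 * n2)) ℂ)
    (R1 : Matrix (Fin (2 * n1)) (Fin (2 * n1)) ℝ)
    (R2 : Matrix (Fin (2 * n2)) (Fin (2 * n2)) ℝ)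
    (R12 : Matrix (Fin (2 * n1)) (Fin (2 * n2)) ℝ)
    (G1 G2 : GOO A m)
    (hG1 : G1 = ⟨S1, mulVecA K1 x1, (2 : ℂ)⁻¹ • quadA x1 (R1.map Complex.ofReal) x1⟩)
    (hG2 : G2 = ⟨S2, mulVecA K2 x2, (2 : ℂ)⁻¹ • quadA x2 (R2.map Complex.ofReal) x2⟩)
    (Hd : A)
    (hHd : Hd = (2 : ℂ)⁻¹ • quadA x1 (R12.map Complex.ofReal) x2 +
        (2 : ℂ)⁻¹ • quadA x2 ((R12ᵀ).map Complex.ofReal) x1 -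
        (2 * Complex.I)⁻¹ •
          (sesqA (mulVecA K2 x2) S2 (mulVecA K1 x1) -
           sesqA (mulVecA K1 x1) S2ᴴ (mulVecA K2 x2))) :
    (seriesProd G2 G1).S = S2 * S1 ∧
    (seriesProd G2 G1).L = mulVecA (Matrix.fromCols (S2 * K1) K2) (Sum.elim x1 x2) ∧
    (seriesProd G2 G1).H + Hd =
      (2 : ℂ)⁻¹ • quadA (Sum.elim x1 x2)
        ((Matrix.fromBlocks R1 R12 R12ᵀ R2).map Complex.ofReal) (Sum.elim x1 x2) := by
  subst hG1 hG2 hHd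
  refine ⟨rfl, ?_, ?_⟩
  · rw [mulVecA_fromCols, mulVecA_mul]
    rfl
  · -- the direct coupling cancels the cross term of the series product
    rw [Matrix.fromBlocks_map, quadA_fromBlocks]
    simp only [seriesProd, smul_add]
    abel

/-- The reducible network formed by the series product `G₂ ◁ G₁` together with
the direct interaction Hamiltonian `H^d₁₂` is the generalized open oscillator triple
`(S₂S₁, [S₂K₁ K₂] x, ½ xᵀ [[R₁,R₁₂],[R₁₂ᵀ,R₂]] x)`. -/
theorem stmt4 (m n1 n2 : ℕ)
    (x1 : Fin (2 * n1) → A) (x2 : Fin (2 * n2) → A)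
    (hx1 : ∀ i, IsSelfAdjoint (x1 i)) (hx2 : ∀ i, IsSelfAdjoint (x2 i))
    (hcomm : ∀ i j, x1 i * x2 j = x2 j * x1 i)
    (S1 S2 : Matrix (Fin m) (Fin m) ℂ)
    (hS1 : S1 ∈ Matrix.unitaryGroup (Fin m) ℂ) (hS2 : S2 ∈ Matrix.unitaryGroup (Fin m) ℂ)
    (K1 : Matrix (Fin m) (Fin (2 * n1)) ℂ) (K2 : Matrix (Fin m) (Fin (2 * n2)) ℂ)
    (R1 : Matrix (Fin (2 * n1)) (Fin (2 * n1)) ℝ) (hR1 : R1ᵀ = R1)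
    (R2 : Matrix (Fin (2 * n2)) (Fin (2 * n2)) ℝ) (hR2 : R2ᵀ = R2)
    (R12 : Matrix (Fin (2 * n1)) (Fin (2 * n2)) ℝ)
    (G1 G2 : GOO A m)
    (hG1 : G1 = ⟨S1, mulVecA K1 x1, (2 : ℂ)⁻¹ • quadA x1 (R1.map Complex.ofReal) x1⟩)
    (hG2 : G2 = ⟨S2, mulVecA K2 x2, (2 : ℂ)⁻¹ • quadA x2 (R2.map Complex.ofReal) x2⟩)
    (Hd : A)
    (hHd : Hd = (2 : ℂ)⁻¹ • quadA x1 (R12.map Complex.ofReal) x2 +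
        (2 : ℂ)⁻¹ • quadA x2 ((R12ᵀ).map Complex.ofReal) x1 -
        (2 * Complex.I)⁻¹ •
          (sesqA (mulVecA K2 x2) S2 (mulVecA K1 x1) -
           sesqA (mulVecA K1 x1) S2ᴴ (mulVecA K2 x2))) :
    (seriesProd G2 G1).S = S2 * S1 ∧
    (seriesProd G2 G1).L = mulVecA (Matrix.fromCols (S2 * K1) K2) (Sum.elim x1 x2) ∧
    (seriesProd G2 G1).H + Hd =
      (2 : ℂ)⁻¹ • quadA (Sum.elim x1 x2)
        ((Matrix.fromBlocks R1 R12 R12ᵀ R2).map Complex.ofReal) (Sum.elim x1 x2) :=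
  stmt4_general m n1 n2 x1 x2 S1 S2 K1 K2 R1 R2 R12 G1 G2 hG1 hG2 Hd hHd
end
end
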